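/- arXiv:2112.09291 — 6 statements merged into one kernel-verified Lean document; each statement's English description precedes it below -/
import Mathlib

section
/- Let σ > 0 and α ∈ ℝ, and define J_{α,σ}(s) = (σ/3)·(max{‖s‖, -α/σ})³ + (α/2)·(max{‖s‖, -α/σ})² for s ∈ ℝⁿ. Then J_{α,σ} is convex on ℝⁿ. -/
/-!
Write `J = h ∘ m` with `h u = σ/3 u³ + α/2 u²` and `m s = max ‖s‖ (-α/σ)`. The map `m` is convex
(a maximum of a norm and a constant) and takes values in `[c, ∞)`, `c = max (-α/σ) 0`. There
`h' u = u (σu + α) ≥ 0` and `h'' u = σu + (σu + α) ≥ 0`, so `h` is monotone and convex on `[c, ∞)`,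
and a monotone convex function of a convex function is convex.
-/

open Set

theorem ConvexOn.comp_of_mapsTo {𝕜 E β γ : Type*} [Semiring 𝕜] [PartialOrder 𝕜]
    [AddCommMonoid E] [AddCommMonoid β] [PartialOrder β] [AddCommMonoid γ] [PartialOrder γ]
    [SMul 𝕜 E] [SMul 𝕜 β] [SMul 𝕜 γ] {s : Set E} {t : Set β} {f : E → β} {g : β → γ}
    (hg : ConvexOn 𝕜 t g) (hg' : MonotoneOn g t) (hf : ConvexOn 𝕜 s f) (hst : MapsTo f s t) :
    ConvexOn 𝕜 s (g ∘ f) :=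
  ⟨hf.1, fun _ hx _ hy _ _ ha hb hab =>
    (hg' (hst (hf.1 hx hy ha hb hab)) (hg.1 (hst hx) (hst hy) ha hb hab)
      (hf.2 hx hy ha hb hab)).trans (hg.2 (hst hx) (hst hy) ha hb hab)⟩

section Cubic

variable {σ α : ℝ}

lemma hasDerivAt_cubic (σ α u : ℝ) :
    HasDerivAt (fun u : ℝ => σ / 3 * u ^ 3 + α / 2 * u ^ 2) (u * (σ * u + α)) u :=
  (((hasDerivAt_pow 3 u).const_mul (σ / 3)).add ((hasDerivAt_pow 2 u).const_mul (α / 2))).congr_deriv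
    (by ring)

lemma hasDerivAt_mul_mul_add (σ α u : ℝ) :
    HasDerivAt (fun u : ℝ => u * (σ * u + α)) (σ * u + (σ * u + α)) u :=
  ((hasDerivAt_id u).mul (((hasDerivAt_id u).const_mul σ).add_const α)).congr_deriv
    (by simp only [id]; ring)

lemma mul_add_nonneg_of_neg_div_le (hσ : 0 < σ) {u : ℝ} (hu : -α / σ ≤ u) : 0 ≤ σ * u + α := by
  rw [div_le_iff₀ hσ] at hu
  linarith

lemma monotoneOn_cubic (hσ : 0 < σ) :
    MonotoneOn (fun u : ℝ => σ / 3 * u ^ 3 + α / 2 * u ^ 2) (Ici (max (-α / σ) 0)) :=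
  monotoneOn_of_hasDerivWithinAt_nonneg (convex_Ici _) (by fun_prop)
    (fun u _ => (hasDerivAt_cubic σ α u).hasDerivWithinAt) fun _ hu =>
      have ⟨hu₁, hu₀⟩ := max_le_iff.1 (interior_subset hu)
      mul_nonneg hu₀ (mul_add_nonneg_of_neg_div_le hσ hu₁)

lemma convexOn_cubic (hσ : 0 < σ) :
    ConvexOn ℝ (Ici (max (-α / σ) 0)) (fun u : ℝ => σ / 3 * u ^ 3 + α / 2 * u ^ 2) :=
  convexOn_of_hasDerivWithinAt2_nonneg (convex_Ici _) (by fun_prop)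
    (fun u _ => (hasDerivAt_cubic σ α u).hasDerivWithinAt)
    (fun u _ => (hasDerivAt_mul_mul_add σ α u).hasDerivWithinAt) fun _ hu =>
      have ⟨hu₁, hu₀⟩ := max_le_iff.1 (interior_subset hu)
      add_nonneg (mul_nonneg hσ.le hu₀) (mul_add_nonneg_of_neg_div_le hσ hu₁)

end Cubic

theorem stmt_3 (n : ℕ) (σ α : ℝ) (hσ : 0 < σ) :
    ConvexOn ℝ Set.univ
      (fun s : EuclideanSpace ℝ (Fin n) =>
        σ / 3 * (max ‖s‖ (-α / σ)) ^ 3 + α / 2 * (max ‖s‖ (-α / σ)) ^ 2) := by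
  have hm : ConvexOn ℝ univ fun s : EuclideanSpace ℝ (Fin n) => max ‖s‖ (-α / σ) :=
    (convexOn_norm convex_univ).sup (convexOn_const _ convex_univ)
  have hmaps : MapsTo (fun s : EuclideanSpace ℝ (Fin n) => max ‖s‖ (-α / σ)) univ
      (Ici (max (-α / σ) 0)) := fun s _ =>
    max_le (le_max_right _ _) ((norm_nonneg s).trans (le_max_left _ _))
  exact (convexOn_cubic hσ).comp_of_mapsTo (monotoneOn_cubic hσ) hm hmaps
end

section
/- Let σ > 0 and α ∈ ℝ, and define J_{α,σ}(s) = (σ/3)·(max{‖s‖, -α/σ})³ + (α/2)·(max{‖s‖, -α/σ})². Then J_{α,σ} is continuously differentiable on ℝⁿ with gradient ∇J_{α,σ}(s) = [σ‖s‖ + α]₊ · s, where [a]₊ = max{a,0}. -/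
/-!
Write `J(s) = g ‖s‖` with `g t = p (max t c)`, where `p u = σ/3 u³ + α/2 u²` and `c = -α/σ`.
Since `p' u = (σ u + α) u` vanishes at the kink `c`, the function `g` is differentiable with
`g' t = p' (max t c) = [σ t + α]₊ t`. A radial function `g ‖s‖` whose profile has derivative of the
form `h t * t` has gradient `h ‖s‖ • s`: away from the origin by the chain rule, and at the origin
because `g' 0 = 0`. That gradient is continuous, so `J` is `C¹`.
-/

open Set Asymptotics InnerProductSpace

section Radial

variable {F : Type*} [NormedAddCommGroup F] [InnerProductSpace ℝ F] [CompleteSpace F]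

theorem HasDerivAt.comp_hasGradientAt {f : F → ℝ} {g : ℝ → ℝ} {g' : ℝ} {v x : F}
    (hg : HasDerivAt g g' (f x)) (hf : HasGradientAt f v x) :
    HasGradientAt (fun y => g (f y)) (g' • v) x := by
  rw [hasGradientAt_iff_hasFDerivAt] at hf ⊢
  refine (hg.comp_hasFDerivAt x hf).congr_fderiv ?_
  ext y
  simp

theorem hasGradientAt_norm {x : F} (hx : x ≠ 0) : HasGradientAt (‖·‖) (‖x‖⁻¹ • x) x := by
  have hsqrt := (Real.hasDerivAt_sqrt (pow_ne_zero 2 (norm_ne_zero_iff.mpr hx))).comp_hasFDerivAt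
    x (hasStrictFDerivAt_norm_sq x).hasFDerivAt
  simp only [Function.comp_def, Real.sqrt_sq (norm_nonneg _)] at hsqrt
  rw [hasGradientAt_iff_hasFDerivAt]
  refine hsqrt.congr_fderiv ?_
  ext y
  simp only [one_div, mul_inv_rev, smul_apply, coe_innerSL_apply, nsmul_eq_mul,
    Nat.cast_ofNat, smul_eq_mul, map_smul, toDual_apply_apply]
  field_simp

theorem hasGradientAt_comp_norm {g h : ℝ → ℝ} (hg : ∀ t, HasDerivAt g (h t * t) t) (x : F) :
    HasGradientAt (fun y => g ‖y‖) (h ‖x‖ • x) x := by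
  rcases eq_or_ne x 0 with rfl | hx
  · have hg0 := hasDerivAt_iff_isLittleO_nhds_zero.mp (hg 0)
    rw [hasGradientAt_iff_isLittleO_nhds_zero, ← isLittleO_norm_right]
    simpa [Function.comp_def] using hg0.comp_tendsto (continuous_norm.tendsto' (0 : F) 0 norm_zero)
  · convert (hg ‖x‖).comp_hasGradientAt (hasGradientAt_norm hx) using 1
    rw [smul_smul, mul_assoc, mul_inv_cancel₀ (norm_ne_zero_iff.mpr hx), mul_one]

theorem contDiff_one_of_hasGradientAt {f : F → ℝ} {f' : F → F}
    (hf : ∀ x, HasGradientAt f (f' x) x) (hf' : Continuous f') : ContDiff ℝ 1 f :=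
  contDiff_one_iff_hasFDerivAt.mpr
    ⟨fun x => toDual ℝ F (f' x), (toDual ℝ F).continuous.comp hf', fun x => (hf x).hasFDerivAt⟩

end Radial

theorem hasDerivAt_comp_max_const {p p' : ℝ → ℝ} {c : ℝ} (hp : ∀ u, HasDerivAt p (p' u) u)
    (hc : p' c = 0) (t : ℝ) : HasDerivAt (fun t => p (max t c)) (p' (max t c)) t := by
  have hle : ∀ t ≤ c, HasDerivWithinAt (fun t => p (max t c)) (p' (max t c)) (Iic c) t :=
    fun t ht => by
      rw [max_eq_right ht, hc]
      exact (hasDerivWithinAt_const t _ (p c)).congr (fun u hu => by rw [max_eq_right hu])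
        (by rw [max_eq_right ht])
  have hge : ∀ t, c ≤ t → HasDerivWithinAt (fun t => p (max t c)) (p' (max t c)) (Ici c) t :=
    fun t ht => by
      rw [max_eq_left ht]
      exact (hp t).hasDerivWithinAt.congr (fun u hu => by rw [max_eq_left hu])
        (by rw [max_eq_left ht])
  rcases lt_trichotomy t c with h | rfl | h
  · exact (hle t h.le).hasDerivAt (Iic_mem_nhds h)
  · simpa using (hle t le_rfl).union (hge t le_rfl)
  · exact (hge t h.le).hasDerivAt (Ici_mem_nhds h)

theorem hasDerivAt_cubic_comp_max {σ α : ℝ} (hσ : 0 < σ) (t : ℝ) :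
    HasDerivAt (fun t => σ / 3 * (max t (-α / σ)) ^ 3 + α / 2 * (max t (-α / σ)) ^ 2)
      (max (σ * t + α) 0 * t) t := by
  set c := -α / σ
  have hσc : σ * c + α = 0 := by rw [mul_div_cancel₀ _ hσ.ne', neg_add_cancel]
  have hp (u : ℝ) : HasDerivAt (fun u => σ / 3 * u ^ 3 + α / 2 * u ^ 2) ((σ * u + α) * u) u :=
    (((hasDerivAt_pow 3 u).const_mul (σ / 3)).add
      ((hasDerivAt_pow 2 u).const_mul (α / 2))).congr_deriv (by norm_num; ring)
  convert hasDerivAt_comp_max_const hp (by rw [hσc, zero_mul]) t using 1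
  rcases le_total t c with h | h
  · rw [max_eq_right h, hσc, zero_mul, max_eq_right (by nlinarith), zero_mul]
  · rw [max_eq_left h, max_eq_left (by nlinarith)]

theorem stmt_4 (n : ℕ) (σ α : ℝ) (hσ : 0 < σ) :
    ContDiff ℝ 1
      (fun s : EuclideanSpace ℝ (Fin n) =>
        σ / 3 * (max ‖s‖ (-α / σ)) ^ 3 + α / 2 * (max ‖s‖ (-α / σ)) ^ 2) ∧
    ∀ s : EuclideanSpace ℝ (Fin n),
      HasGradientAt
        (fun s : EuclideanSpace ℝ (Fin n) =>
          σ / 3 * (max ‖s‖ (-α / σ)) ^ 3 + α / 2 * (max ‖s‖ (-α / σ)) ^ 2)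
        ((max (σ * ‖s‖ + α) 0) • s) s := by
  have hgrad := hasGradientAt_comp_norm (F := EuclideanSpace ℝ (Fin n))
    (hasDerivAt_cubic_comp_max (α := α) hσ)
  exact ⟨contDiff_one_of_hasGradientAt hgrad (by fun_prop), hgrad⟩
end

section
/- Let H be a symmetric n×n matrix, g ∈ ℝⁿ, σ > 0, and α = λ_min(H) < 0. Define m̃(s) = gᵀs + (1/2)sᵀ(H - αI)s + J_{α,σ}(s), where J_{α,σ}(s) = (σ/3)(max{‖s‖, -α/σ})³ + (α/2)(max{‖s‖, -α/σ})². Then m̃ is a convex function on ℝⁿ. -/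
open RealInnerProductSpace

-- cubic h(t) = σ/3 t³ + α/2 t² is monotone on [-α/σ, ∞)
private lemma cubic_mono {σ α x y : ℝ} (hσ : 0 < σ) (hα : α < 0)
    (hx : -α / σ ≤ x) (hxy : x ≤ y) :
    σ / 3 * x ^ 3 + α / 2 * x ^ 2 ≤ σ / 3 * y ^ 3 + α / 2 * y ^ 2 := by
  have hc : 0 < -α / σ := div_pos (by linarith) hσ
  have hx0 : 0 ≤ x := le_trans hc.le hx
  have hy0 : 0 ≤ y := le_trans hx0 hxy
  have h1 : 0 ≤ σ * x + α := by
    have := (div_le_iff₀ hσ).mp hx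
    nlinarith
  have h2 : 0 ≤ σ * y + α := by nlinarith
  have hd : 0 ≤ y - x := sub_nonneg.mpr hxy
  nlinarith [mul_nonneg (mul_nonneg hd hx0) h1, mul_nonneg (mul_nonneg hd hy0) h2,
    mul_nonneg (mul_nonneg hd hx0) h2, mul_nonneg (mul_nonneg hd hy0) h1]

-- cubic h is convex on [-α/σ, ∞)
private lemma cubic_cvx {σ α x y a b : ℝ} (hσ : 0 < σ) (hα : α < 0)
    (hx : -α / σ ≤ x) (hy : -α / σ ≤ y)
    (ha : 0 ≤ a) (hb : 0 ≤ b) (hab : a + b = 1) :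
    σ / 3 * (a * x + b * y) ^ 3 + α / 2 * (a * x + b * y) ^ 2 ≤
      a * (σ / 3 * x ^ 3 + α / 2 * x ^ 2) + b * (σ / 3 * y ^ 3 + α / 2 * y ^ 2) := by
  have hc : 0 < -α / σ := div_pos (by linarith) hσ
  have hx0 : 0 ≤ x := le_trans hc.le hx
  have hy0 : 0 ≤ y := le_trans hc.le hy
  have h1 : 0 ≤ σ * x + α := by
    have := (div_le_iff₀ hσ).mp hx; nlinarith
  have h2 : 0 ≤ σ * y + α := by
    have := (div_le_iff₀ hσ).mp hy; nlinarith
  have hb1 : b = 1 - a := by linarith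
  subst hb1
  have K : 0 ≤ a * (1 - a) * (x - y) ^ 2 := mul_nonneg (mul_nonneg ha hb) (sq_nonneg (x - y))
  nlinarith [mul_nonneg K h1, mul_nonneg K h2,
    mul_nonneg (mul_nonneg K ha) (mul_nonneg hσ.le hx0),
    mul_nonneg (mul_nonneg K hb) (mul_nonneg hσ.le hy0),
    mul_nonneg K (by linarith : (0:ℝ) ≤ -α)]

-- φ(t) = σ/3 (max t c)³ + α/2 (max t c)², c = -α/σ
private lemma phi_mono {σ α : ℝ} (hσ : 0 < σ) (hα : α < 0) :
    Monotone (fun t : ℝ => σ / 3 * (max t (-α / σ)) ^ 3 + α / 2 * (max t (-α / σ)) ^ 2) := by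
  intro s t hst
  exact cubic_mono hσ hα (le_max_right _ _) (max_le_max hst le_rfl)

private lemma phi_cvx_aux {σ α x y a b : ℝ} (hσ : 0 < σ) (hα : α < 0) (hxy : x ≤ y)
    (ha : 0 ≤ a) (hb : 0 ≤ b) (hab : a + b = 1) :
    σ / 3 * (max (a * x + b * y) (-α / σ)) ^ 3 + α / 2 * (max (a * x + b * y) (-α / σ)) ^ 2 ≤
      a * (σ / 3 * (max x (-α / σ)) ^ 3 + α / 2 * (max x (-α / σ)) ^ 2) +
      b * (σ / 3 * (max y (-α / σ)) ^ 3 + α / 2 * (max y (-α / σ)) ^ 2) := by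
  set c := -α / σ with hc
  have hx1 : x = a * x + b * x := by rw [← add_mul, hab, one_mul]
  have hy1 : y = a * y + b * y := by rw [← add_mul, hab, one_mul]
  have hzx : x ≤ a * x + b * y := by
    have h := mul_le_mul_of_nonneg_left hxy hb; linarith
  have hzy : a * x + b * y ≤ y := by
    have h := mul_le_mul_of_nonneg_left hxy ha; linarith
  have hE : ∀ t : ℝ, a * (σ / 3 * t ^ 3 + α / 2 * t ^ 2) + b * (σ / 3 * t ^ 3 + α / 2 * t ^ 2)
      = σ / 3 * t ^ 3 + α / 2 * t ^ 2 := fun t => by rw [← add_mul, hab, one_mul]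
  rcases le_or_gt y c with hyc | hyc
  · -- everything is ≤ c
    rw [max_eq_right hyc, max_eq_right (hzy.trans hyc), max_eq_right ((hzx.trans hzy).trans hyc)]
    linarith [hE c]
  · rw [max_eq_left hyc.le]
    rcases le_or_gt (a * x + b * y) c with hzc | hzc
    · -- z ≤ c, x ≤ c
      rw [max_eq_right hzc, max_eq_right (hzx.trans hzc)]
      have hmc := cubic_mono (σ := σ) (α := α) hσ hα (le_refl c) hyc.le
      nlinarith [mul_nonneg hb (sub_nonneg.mpr hmc), hE c]
    · rw [max_eq_left hzc.le]
      rcases le_or_gt c x with hcx | hcx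
      · rw [max_eq_left hcx]
        exact cubic_cvx hσ hα hcx hyc.le ha hb hab
      · -- x < c ≤ z
        rw [max_eq_right hcx.le]
        have h1 : a * x + b * y ≤ a * c + b * y := by
          nlinarith [mul_nonneg ha (sub_nonneg.mpr hcx.le)]
        have h2 := cubic_mono (σ := σ) (α := α) hσ hα (le_of_lt hzc) h1
        have h3 := cubic_cvx (σ := σ) (α := α) hσ hα (le_refl c) hyc.le ha hb hab
        linarith

private lemma phi_cvx {σ α : ℝ} (hσ : 0 < σ) (hα : α < 0) :
    ConvexOn ℝ Set.univ
      (fun t : ℝ => σ / 3 * (max t (-α / σ)) ^ 3 + α / 2 * (max t (-α / σ)) ^ 2) := by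
  refine ⟨convex_univ, ?_⟩
  intro x _ y _ a b ha hb hab
  simp only [smul_eq_mul]
  rcases le_total x y with hxy | hxy
  · exact phi_cvx_aux hσ hα hxy ha hb hab
  · have h := phi_cvx_aux (σ := σ) (α := α) hσ hα hxy hb ha (by linarith)
    have e : b * y + a * x = a * x + b * y := by ring
    rw [e] at h
    linarith

theorem stmt_5 (n : ℕ) (H : EuclideanSpace ℝ (Fin n) →L[ℝ] EuclideanSpace ℝ (Fin n))
    (hsym : ∀ x y : EuclideanSpace ℝ (Fin n), ⟪H x, y⟫ = ⟪x, H y⟫)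
    (g : EuclideanSpace ℝ (Fin n)) (σ α : ℝ) (hσ : 0 < σ) (hα : α < 0)
    (heig : ∃ v : EuclideanSpace ℝ (Fin n), v ≠ 0 ∧ H v = α • v)
    (hmin : ∀ s : EuclideanSpace ℝ (Fin n), α * ‖s‖ ^ 2 ≤ ⟪s, H s⟫) :
    ConvexOn ℝ Set.univ
      (fun s : EuclideanSpace ℝ (Fin n) =>
        ⟪g, s⟫ + 1 / 2 * (⟪s, H s⟫ - α * ‖s‖ ^ 2) +
          (σ / 3 * (max ‖s‖ (-α / σ)) ^ 3 + α / 2 * (max ‖s‖ (-α / σ)) ^ 2)) := by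
  have hlin : ConvexOn ℝ (Set.univ : Set (EuclideanSpace ℝ (Fin n)))
      (fun s => ⟪g, s⟫ + 1 / 2 * (⟪s, H s⟫ - α * ‖s‖ ^ 2)) := by
    refine ⟨convex_univ, ?_⟩
    intro x _ y _ a b ha hb hab
    have hyx : ⟪y, H x⟫ = ⟪x, H y⟫ := by rw [real_inner_comm]; exact hsym x y
    have hxy : ⟪y, x⟫ = ⟪x, y⟫ := real_inner_comm x y
    have key := hmin (x - y)
    have e2 : ⟪x - y, H (x - y)⟫ = ⟪x, H x⟫ - 2 * ⟪x, H y⟫ + ⟪y, H y⟫ := by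
      simp only [map_sub, inner_sub_left, inner_sub_right]
      rw [hyx]; ring
    rw [norm_sub_sq_real, e2] at key
    have e3 : ⟪g, a • x + b • y⟫ = a * ⟪g, x⟫ + b * ⟪g, y⟫ := by
      rw [inner_add_right, real_inner_smul_right, real_inner_smul_right]
    have e4 : ⟪a • x + b • y, H (a • x + b • y)⟫ =
        a ^ 2 * ⟪x, H x⟫ + 2 * (a * b) * ⟪x, H y⟫ + b ^ 2 * ⟪y, H y⟫ := by
      simp only [map_add, map_smul, inner_add_left, inner_add_right,
        real_inner_smul_left, real_inner_smul_right]
      rw [hyx]; ring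
    have e5 : ‖a • x + b • y‖ ^ 2 =
        a ^ 2 * ‖x‖ ^ 2 + 2 * (a * b) * ⟪x, y⟫ + b ^ 2 * ‖y‖ ^ 2 := by
      rw [← real_inner_self_eq_norm_sq, ← real_inner_self_eq_norm_sq,
        ← real_inner_self_eq_norm_sq]
      simp only [inner_add_left, inner_add_right, real_inner_smul_left, real_inner_smul_right]
      rw [hxy]; ring
    simp only [smul_eq_mul]
    rw [e3, e4, e5]
    have hb' : b = 1 - a := by linarith
    subst hb'
    nlinarith [mul_nonneg (mul_nonneg ha (by linarith : (0:ℝ) ≤ 1 - a))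
      (sub_nonneg.mpr key)]
  have hJ : ConvexOn ℝ (Set.univ : Set (EuclideanSpace ℝ (Fin n)))
      (fun s => σ / 3 * (max ‖s‖ (-α / σ)) ^ 3 + α / 2 * (max ‖s‖ (-α / σ)) ^ 2) := by
    refine ⟨convex_univ, ?_⟩
    intro x _ y _ a b ha hb hab
    have hn : ‖a • x + b • y‖ ≤ a * ‖x‖ + b * ‖y‖ := by
      calc ‖a • x + b • y‖ ≤ ‖a • x‖ + ‖b • y‖ := norm_add_le _ _
        _ = a * ‖x‖ + b * ‖y‖ := by rw [norm_smul, norm_smul, Real.norm_of_nonneg ha,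
            Real.norm_of_nonneg hb]
    have hm := phi_mono (σ := σ) (α := α) hσ hα hn
    have hc := (phi_cvx (σ := σ) (α := α) hσ hα).2 (Set.mem_univ ‖x‖) (Set.mem_univ ‖y‖)
      ha hb hab
    simp only [smul_eq_mul] at hm hc ⊢
    exact hm.trans hc
  exact hlin.add hJ
end

section
/- For all a > 0, the inequality (2/3)·(32a² + 16a + 3√(25 + 32a) - 9)/(2a + 1)² ≥ 4 holds. -/
theorem stmt_9 (a : ℝ) (ha : 0 < a) :
    4 ≤ 2 / 3 * ((32 * a ^ 2 + 16 * a + 3 * Real.sqrt (25 + 32 * a) - 9) / (2 * a + 1) ^ 2) := by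
  set s := Real.sqrt (25 + 32 * a) with hs
  have hs0 : 0 ≤ s := Real.sqrt_nonneg _
  have hs2 : s ^ 2 = 25 + 32 * a := by
    rw [hs, Real.sq_sqrt (by linarith)]
  have key : 15 + 8 * a - 8 * a ^ 2 ≤ 3 * s := by
    rcases le_or_gt (15 + 8 * a - 8 * a ^ 2) 0 with h | h
    · linarith
    · have ha2 : a < 2 := by nlinarith
      nlinarith [sq_nonneg (3 * s - (15 + 8 * a - 8 * a ^ 2)), mul_pos ha ha]
  have hd : (0:ℝ) < (2 * a + 1) ^ 2 := by positivity
  rw [mul_div_assoc', le_div_iff₀ hd]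
  nlinarith [key]
end

section
/- Let H be symmetric with a unit vector v satisfying vᵀHv = α where α ≤ -ε_E < 0, let g ∈ ℝⁿ, σ > 0, and let w = βv with ‖w‖ = |α| and wᵀg ≤ 0. Set d = w/(2σ). Then m(d) = gᵀd + (1/2)dᵀHd + (σ/3)‖d‖³ ≤ α³/(12σ²), and hence -m(d) ≥ ε_E³/(12σ²). -/
/-!
Along `w` the curvature is `⟪w, H w⟫ = ‖w‖² α = α³`, so for `d = w / (2σ)` the quadratic and
cubic terms of the model are `α³ / (8σ²)` and `-α³ / (24σ²)`, summing to `α³ / (12σ²)`, while the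
linear term `⟪g, d⟫` is nonpositive by the choice of sign of `w`.
-/

open RealInnerProductSpace

section CubicModel

variable {E : Type*} [NormedAddCommGroup E] [InnerProductSpace ℝ E]

noncomputable def cubicModel (g : E) (H : E →ₗ[ℝ] E) (σ : ℝ) (d : E) : ℝ :=
  ⟪g, d⟫ + 1 / 2 * ⟪d, H d⟫ + σ / 3 * ‖d‖ ^ 3

theorem inner_smul_map_smul (H : E →ₗ[ℝ] E) (c : ℝ) (v : E) :
    ⟪c • v, H (c • v)⟫ = c ^ 2 * ⟪v, H v⟫ := by
  rw [map_smul, real_inner_smul_left, real_inner_smul_right]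
  ring

theorem inner_map_self_eq_cube_of_norm_eq_abs (H : E →ₗ[ℝ] E) {v : E} {β α : ℝ}
    (hv : ‖v‖ = 1) (hα : α = ⟪v, H v⟫) (hnorm : ‖β • v‖ = |α|) :
    ⟪β • v, H (β • v)⟫ = α ^ 3 := by
  have hβ : β ^ 2 = α ^ 2 := by
    rw [norm_smul, hv, mul_one, Real.norm_eq_abs] at hnorm
    rw [← sq_abs β, hnorm, sq_abs]
  rw [inner_smul_map_smul, hβ, ← hα]
  ring

theorem cubicModel_smul_le {g w : E} {H : E →ₗ[ℝ] E} {σ α : ℝ} (hσ : 0 < σ)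
    (hnorm : ‖w‖ = -α) (hcurv : ⟪w, H w⟫ = α ^ 3) (hwg : ⟪w, g⟫ ≤ 0) :
    cubicModel g H σ ((1 / (2 * σ)) • w) ≤ α ^ 3 / (12 * σ ^ 2) := by
  have hc : 0 ≤ 1 / (2 * σ) := by positivity
  have hgd : ⟪g, (1 / (2 * σ)) • w⟫ ≤ 0 := by
    rw [real_inner_smul_right, real_inner_comm]
    exact mul_nonpos_of_nonneg_of_nonpos hc hwg
  have hcubic : 1 / 2 * ⟪(1 / (2 * σ)) • w, H ((1 / (2 * σ)) • w)⟫
      + σ / 3 * ‖(1 / (2 * σ)) • w‖ ^ 3 = α ^ 3 / (12 * σ ^ 2) := by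
    rw [inner_smul_map_smul, hcurv, norm_smul, Real.norm_of_nonneg hc, hnorm]
    field_simp
    ring
  unfold cubicModel
  linarith

end CubicModel

theorem stmt_15_general (n : ℕ) (H : EuclideanSpace ℝ (Fin n) →L[ℝ] EuclideanSpace ℝ (Fin n))
    (g v w d : EuclideanSpace ℝ (Fin n)) (σ α εE β : ℝ)
    (hσ : 0 < σ) (hε : 0 < εE)
    (hv : ‖v‖ = 1) (hα : α = ⟪v, H v⟫) (hαneg : α ≤ -εE)
    (hw : w = β • v) (hwnorm : ‖w‖ = |α|) (hwg : ⟪w, g⟫ ≤ 0)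
    (hd : d = (1 / (2 * σ)) • w) :
    ⟪g, d⟫ + 1 / 2 * ⟪d, H d⟫ + σ / 3 * ‖d‖ ^ 3 ≤ α ^ 3 / (12 * σ ^ 2) ∧
    εE ^ 3 / (12 * σ ^ 2) ≤ -(⟪g, d⟫ + 1 / 2 * ⟪d, H d⟫ + σ / 3 * ‖d‖ ^ 3) := by
  have hαlt : α < 0 := by linarith
  have hcurv : ⟪w, H w⟫ = α ^ 3 := by
    subst hw
    exact inner_map_self_eq_cube_of_norm_eq_abs H.toLinearMap hv hα hwnorm
  have hmodel : ⟪g, d⟫ + 1 / 2 * ⟪d, H d⟫ + σ / 3 * ‖d‖ ^ 3 ≤ α ^ 3 / (12 * σ ^ 2) := by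
    rw [hd]
    exact (cubicModel_smul_le hσ (by rw [hwnorm, abs_of_neg hαlt]) hcurv hwg :
      cubicModel g H.toLinearMap σ _ ≤ _)
  have hεα : εE ^ 3 ≤ (-α) ^ 3 := pow_le_pow_left₀ hε.le (by linarith) 3
  have hscale : εE ^ 3 / (12 * σ ^ 2) ≤ -(α ^ 3 / (12 * σ ^ 2)) := by
    rw [← neg_div, ← Odd.neg_pow (by decide)]
    gcongr
  exact ⟨hmodel, by linarith⟩

theorem stmt_15 (n : ℕ) (H : EuclideanSpace ℝ (Fin n) →L[ℝ] EuclideanSpace ℝ (Fin n))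
    (hsym : ∀ x y : EuclideanSpace ℝ (Fin n), ⟪H x, y⟫ = ⟪x, H y⟫)
    (g v w d : EuclideanSpace ℝ (Fin n)) (σ α εE β : ℝ)
    (hσ : 0 < σ) (hε : 0 < εE)
    (hv : ‖v‖ = 1) (hα : α = ⟪v, H v⟫) (hαneg : α ≤ -εE)
    (hw : w = β • v) (hwnorm : ‖w‖ = |α|) (hwg : ⟪w, g⟫ ≤ 0)
    (hd : d = (1 / (2 * σ)) • w) :
    ⟪g, d⟫ + 1 / 2 * ⟪d, H d⟫ + σ / 3 * ‖d‖ ^ 3 ≤ α ^ 3 / (12 * σ ^ 2) ∧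
    εE ^ 3 / (12 * σ ^ 2) ≤ -(⟪g, d⟫ + 1 / 2 * ⟪d, H d⟫ + σ / 3 * ‖d‖ ^ 3) :=
  stmt_15_general n H g v w d σ α εE β hσ hε hv hα hαneg hw hwnorm hwg hd
end

section
/- Suppose a sequence of positive regularization parameters satisfies: σ_{k+1} = σ_k/γ if iteration k is successful and σ_{k+1} = γσ_k otherwise, where γ > 1, and suppose that whenever σ_k ≥ L/2 the iteration k is successful. Then σ_k ≤ max{σ_0, γL/2} for all k ≥ 0. -/
theorem stmt_18 (γ L σ0 : ℝ) (hγ : 1 < γ) (hL : 0 < L) (hσ0 : 0 < σ0)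
    (σ : ℕ → ℝ) (hσ0' : σ 0 = σ0) (hσpos : ∀ k, 0 < σ k)
    (success : ℕ → Prop)
    (hupd : ∀ k, (success k → σ (k + 1) = σ k / γ) ∧ (¬success k → σ (k + 1) = γ * σ k))
    (hsuc : ∀ k, L / 2 ≤ σ k → success k) :
    ∀ k, σ k ≤ max σ0 (γ * L / 2) := by
  intro k
  induction k with
  | zero => simp [hσ0']
  | succ n ih =>
    by_cases hs : success n
    · have h := (hupd n).1 hs
      rw [h]
      calc σ n / γ ≤ σ n := by
            rw [div_le_iff₀ (by linarith)]
            nlinarith [hσpos n]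
        _ ≤ _ := ih
    · have h := (hupd n).2 hs
      have hlt : σ n < L / 2 := by
        by_contra hle
        exact hs (hsuc n (le_of_not_gt hle))
      rw [h]
      have : γ * σ n < γ * L / 2 := by nlinarith
      exact le_trans this.le (le_max_right _ _)
end
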